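/- Assume additionally that tr B ≥ 0. Then there exists a constant c₁ > 0 such that V(t) ≥ c₁·t for all t ≥ 1. -/

import Mathlib

open MeasureTheory Matrix Real
open scoped ENNReal Topology

noncomputable section

/-- The covariance matrix `K(t) = (1/t) ∫₀ᵗ e^{sB} Q e^{sBᵀ} ds`. -/
def hK {N : ℕ} (Q B : Matrix (Fin N) (Fin N) ℝ) (t : ℝ) : Matrix (Fin N) (Fin N) ℝ :=
  Matrix.of fun i j =>
    (1 / t) * ∫ s in (0:ℝ)..t, (NormedSpace.exp (s • B) * Q * NormedSpace.exp (s • Bᵀ)) i j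

/-- The intertwined pseudo-distance `m_t(X,Y) = ⟨K(t)⁻¹(Y - e^{tB}X), Y - e^{tB}X⟩^{1/2}`. -/
def hm {N : ℕ} (Q B : Matrix (Fin N) (Fin N) ℝ) (t : ℝ) (X Y : Fin N → ℝ) : ℝ :=
  Real.sqrt (dotProduct ((hK Q B t)⁻¹.mulVec (Y - (NormedSpace.exp (t • B)).mulVec X))
    (Y - (NormedSpace.exp (t • B)).mulVec X))

/-- The volume of the unit ball in `ℝᴺ`. -/
def omegaN (N : ℕ) : ℝ := (volume (Metric.ball (0 : EuclideanSpace ℝ (Fin N)) 1)).toReal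

/-- The volume function `V(t) = ω_N (det (t K(t)))^{1/2}`. -/
def hV {N : ℕ} (Q B : Matrix (Fin N) (Fin N) ℝ) (t : ℝ) : ℝ :=
  omegaN N * Real.sqrt ((t • hK Q B t).det)

/-- Hörmander's kernel `p(X,Y,t) = (4π)^{-N/2} ω_N V(t)⁻¹ exp(-m_t(X,Y)²/(4t))`. -/
def hkernel {N : ℕ} (Q B : Matrix (Fin N) (Fin N) ℝ) (X Y : Fin N → ℝ) (t : ℝ) : ℝ :=
  ((4 * π) ^ (-(N : ℝ) / 2) * omegaN N / hV Q B t) * Real.exp (-(hm Q B t X Y) ^ 2 / (4 * t))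

/-- The Hörmander semigroup `P_t f(X) = ∫ p(X,Y,t) f(Y) dY`. -/
def hP {N : ℕ} (Q B : Matrix (Fin N) (Fin N) ℝ) (t : ℝ) (f : (Fin N → ℝ) → ℝ)
    (X : Fin N → ℝ) : ℝ :=
  ∫ Y, hkernel Q B X Y t * f Y

/-- The Riesz potential `ℐ_α f(X) = Γ(α/2)⁻¹ ∫₀^∞ t^{α/2-1} P_t f(X) dt`. -/
def riesz {N : ℕ} (Q B : Matrix (Fin N) (Fin N) ℝ) (α : ℝ) (f : (Fin N → ℝ) → ℝ)
    (X : Fin N → ℝ) : ℝ :=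
  (1 / Real.Gamma (α / 2)) * ∫ t in Set.Ioi (0:ℝ), t ^ (α / 2 - 1) * hP Q B t f X

/-- The Poisson semigroup `𝒫_z f(X) = (4π)^{-1/2} ∫₀^∞ z t^{-3/2} e^{-z²/(4t)} P_t f(X) dt`. -/
def poisson {N : ℕ} (Q B : Matrix (Fin N) (Fin N) ℝ) (z : ℝ) (f : (Fin N → ℝ) → ℝ)
    (X : Fin N → ℝ) : ℝ :=
  (4 * π) ^ (-(1:ℝ) / 2) *
    ∫ t in Set.Ioi (0:ℝ), z * t ^ (-(3:ℝ) / 2) * Real.exp (-(z ^ 2) / (4 * t)) * hP Q B t f X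

/-- The Poisson radial maximal function `ℳ* f(X) = sup_{z>0} |𝒫_z f(X)|`. -/
def maxP {N : ℕ} (Q B : Matrix (Fin N) (Fin N) ℝ) (f : (Fin N → ℝ) → ℝ)
    (X : Fin N → ℝ) : ℝ :=
  ⨆ z : {z : ℝ // 0 < z}, |poisson Q B z.1 f X|

/-- The fractional power `(-𝒜)^s f(X) = -(s/Γ(1-s)) ∫₀^∞ t^{-(1+s)} (P_t f(X) - f(X)) dt`. -/
def fracA {N : ℕ} (Q B : Matrix (Fin N) (Fin N) ℝ) (s : ℝ) (f : (Fin N → ℝ) → ℝ)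
    (X : Fin N → ℝ) : ℝ :=
  -(s / Real.Gamma (1 - s)) * ∫ t in Set.Ioi (0:ℝ), t ^ (-(1 + s)) * (hP Q B t f X - f X)

/-- The degenerate Ornstein-Uhlenbeck operator `𝒜 f = tr(Q ∇²f) + ⟨BX, ∇f⟩`. -/
def opA {N : ℕ} (Q B : Matrix (Fin N) (Fin N) ℝ) (f : (Fin N → ℝ) → ℝ)
    (X : Fin N → ℝ) : ℝ :=
  (∑ i, ∑ j, Q i j * fderiv ℝ (fun Y => fderiv ℝ f Y (Pi.single j 1)) X (Pi.single i 1)) +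
    ∑ i, B.mulVec X i * fderiv ℝ f X (Pi.single i 1)

/-!
Write `t K(t) = G(0, t)` with `G(a, b) = ∫ₐᵇ e^{sB} Q e^{sBᵀ} ds`. Then
`G(0, a + b) = G(0, a) + e^{aB} G(0, b) e^{aBᵀ}` and `det e^{aB} = e^{a tr B} ≥ 1`, so Minkowski's
determinant inequality makes `t ↦ √(det G(0, t))` superadditive, and a nonnegative superadditive
function grows at least linearly.
-/

open NormedSpace

open Finset in
theorem Finset.one_add_prod_le_prod_one_add {ι : Type*} {s : Finset ι} (hs : s.Nonempty)
    {f : ι → ℝ} (hf : ∀ i ∈ s, 0 ≤ f i) : 1 + ∏ i ∈ s, f i ≤ ∏ i ∈ s, (1 + f i) := by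
  induction hs using Finset.Nonempty.cons_induction with
  | singleton a => simp
  | cons a s _ _ ih =>
    rw [prod_cons, prod_cons]
    have hrest := ih fun i hi => hf i (mem_cons_of_mem hi)
    have hfa := hf a (mem_cons_self a s)
    have hprod : 0 ≤ ∏ i ∈ s, f i := prod_nonneg fun i hi => hf i (mem_cons_of_mem hi)
    nlinarith

theorem Real.one_add_sqrt_mul_le {a b : ℝ} (ha : 0 ≤ a) (hb : 0 ≤ b) :
    1 + √(a * b) ≤ √((1 + a) * (1 + b)) := by
  rw [Real.le_sqrt (by positivity) (by positivity), add_sq, Real.sq_sqrt (by positivity),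
    Real.sqrt_mul ha]
  nlinarith [sq_nonneg (√a - √b), Real.sq_sqrt ha, Real.sq_sqrt hb]

theorem Real.one_add_sqrt_prod_le {ι : Type*} [Fintype ι] (hι : 1 < Fintype.card ι)
    {f : ι → ℝ} (hf : ∀ i, 0 ≤ f i) : 1 + √(∏ i, f i) ≤ √(∏ i, (1 + f i)) := by
  classical
  obtain ⟨i₀⟩ : Nonempty ι := Fintype.card_pos_iff.mp (by omega)
  have hrest : (Finset.univ.erase i₀).Nonempty := by
    rw [← Finset.card_pos, Finset.card_erase_of_mem (Finset.mem_univ _), Finset.card_univ]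
    omega
  rw [← Finset.mul_prod_erase _ _ (Finset.mem_univ i₀),
    ← Finset.mul_prod_erase _ (fun i => 1 + f i) (Finset.mem_univ i₀)]
  calc 1 + √(f i₀ * ∏ i ∈ Finset.univ.erase i₀, f i)
      ≤ √((1 + f i₀) * (1 + ∏ i ∈ Finset.univ.erase i₀, f i)) :=
        Real.one_add_sqrt_mul_le (hf i₀) (Finset.prod_nonneg fun i _ => hf i)
    _ ≤ √((1 + f i₀) * ∏ i ∈ Finset.univ.erase i₀, (1 + f i)) := by
        gcongr
        · linarith [hf i₀]
        · exact Finset.one_add_prod_le_prod_one_add hrest fun i _ => hf i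

theorem half_mul_le_of_superadditive {f : ℝ → ℝ} (hf : ∀ t > 0, 0 ≤ f t)
    (hadd : ∀ a b, 0 < a → 0 < b → f a + f b ≤ f (a + b)) {t : ℝ} (ht : 1 ≤ t) :
    t / 2 * f 1 ≤ f t := by
  have hnat (m : ℕ) (hm : 1 ≤ m) : m * f 1 ≤ f m := by
    induction m, hm using Nat.le_induction with
    | base => simp
    | succ m hm ih =>
      have hm' : (0 : ℝ) < m := by exact_mod_cast hm
      push_cast
      linarith [hadd m 1 hm' one_pos]
  set m := ⌊t⌋₊
  have hm : 1 ≤ m := Nat.le_floor (by exact_mod_cast ht)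
  have hmt : (m : ℝ) ≤ t := Nat.floor_le (by linarith)
  have htm : t < m + 1 := Nat.lt_floor_add_one t
  have hfloor : f m ≤ f t := by
    rcases hmt.eq_or_lt with h | h
    · rw [h]
    · have := hadd m (t - m) (by exact_mod_cast hm) (by linarith)
      rw [add_sub_cancel] at this
      linarith [hf (t - m) (by linarith)]
  have hm1 : (1 : ℝ) ≤ m := by exact_mod_cast hm
  nlinarith [hnat m hm, hf 1 one_pos]

namespace Matrix

variable {n : Type*} [Fintype n] [DecidableEq n]

section DetExp

attribute [local instance] Matrix.linftyOpNormedRing Matrix.linftyOpNormedAlgebra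

theorem differentiable_det : Differentiable ℝ (det : Matrix n n ℝ → ℝ) := by
  have hentry (i j : n) : Differentiable ℝ fun A : Matrix n n ℝ => A i j :=
    (entryLinearMap ℝ ℝ i j).toContinuousLinearMap.differentiable
  simp_rw [funext det_apply']
  fun_prop

theorem hasDerivAt_det_one_add_smul (M : Matrix n n ℝ) :
    HasDerivAt (fun h : ℝ => det (1 + h • M)) (trace M) 0 := by
  simp_rw [fun h : ℝ => det_one_add_smul h M]
  set p := (det (1 + (Polynomial.X : Polynomial ℝ) • M.map Polynomial.C)).divX.divX
  have := (((hasDerivAt_id (0 : ℝ)).const_mul (trace M)).const_add 1).fun_add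
    ((p.hasDerivAt 0).fun_mul (hasDerivAt_pow 2 (0 : ℝ)))
  simpa using this

theorem fderiv_det_one_apply (M : Matrix n n ℝ) :
    fderiv ℝ det (1 : Matrix n n ℝ) M = trace M := by
  have hline := ((hasDerivAt_id (0 : ℝ)).smul_const M).const_add (1 : Matrix n n ℝ)
  have hdet : HasFDerivAt det (fderiv ℝ det (1 : Matrix n n ℝ)) (1 + id (0 : ℝ) • M) := by
    simpa using (differentiable_det 1).hasFDerivAt
  have h := (hdet.comp_hasDerivAt 0 hline).unique (hasDerivAt_det_one_add_smul M)
  rwa [one_smul] at h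

-- `det e^{sA} = det e^{tA} * det e^{(s - t)A}` reduces this to the derivative of `det` at `1`.
theorem hasDerivAt_det_exp_smul (A : Matrix n n ℝ) (t : ℝ) :
    HasDerivAt (fun s : ℝ => det (exp (s • A))) (trace A * det (exp (t • A))) t := by
  have hexp := (hasDerivAt_exp_smul_const A (t - t)).comp_sub_const t t
  simp only [sub_self, zero_smul, NormedSpace.exp_zero, one_mul] at hexp
  have hdet : HasFDerivAt det (fderiv ℝ det (1 : Matrix n n ℝ)) (exp ((t - t) • A)) := by
    simpa using (differentiable_det 1).hasFDerivAt
  have hsplit : (fun s : ℝ => det (exp (s • A))) =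
      fun s => det (exp (t • A)) * det (exp ((s - t) • A)) := by
    funext s
    rw [← det_mul, ← exp_add_of_commute _ _ ((Commute.refl A).smul_left t |>.smul_right _),
      ← add_smul, add_sub_cancel]
  rw [hsplit, mul_comm, ← fderiv_det_one_apply]
  exact (hdet.comp_hasDerivAt t hexp).const_mul (det (exp (t • A)))

theorem det_exp (A : Matrix n n ℝ) : det (exp A) = Real.exp (trace A) := by
  have hconst (s : ℝ) :
      HasDerivAt (fun s : ℝ => det (exp (s • A)) * Real.exp (-(s * trace A))) 0 s :=
    ((hasDerivAt_det_exp_smul A s).fun_mul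
      (hasDerivAt_mul_const (trace A)).fun_neg.exp).congr_deriv (by ring)
  have h := is_const_of_deriv_eq_zero (fun s => (hconst s).differentiableAt)
    (fun s => (hconst s).deriv) 1 0
  simp only [one_smul, one_mul, zero_smul, NormedSpace.exp_zero, det_one, zero_mul, neg_zero,
    Real.exp_zero] at h
  rwa [Real.exp_neg, mul_inv_eq_one₀ (Real.exp_pos _).ne'] at h

end DetExp

theorem IsHermitian.det_one_add {T : Matrix n n ℝ} (hT : T.IsHermitian) :
    det (1 + T) = ∏ i, (1 + hT.eigenvalues i) := by
  have h := congrArg (Polynomial.eval (-1)) hT.charpoly_eq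
  rw [eval_charpoly, Polynomial.eval_prod] at h
  have hneg : 1 + T = -(scalar n (-1 : ℝ) - T) := by
    ext i j
    by_cases hij : i = j <;> simp [hij, add_comm]
  rw [hneg, det_neg, h, ← Finset.card_univ, ← Finset.prod_const, ← Finset.prod_mul_distrib]
  simp [add_comm]

theorem PosSemidef.one_add_sqrt_det_le (hn : 1 < Fintype.card n) {T : Matrix n n ℝ}
    (hT : T.PosSemidef) : 1 + √(det T) ≤ √(det (1 + T)) := by
  rw [hT.1.det_one_add, hT.1.det_eq_prod_eigenvalues]
  simpa using Real.one_add_sqrt_prod_le hn hT.eigenvalues_nonneg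

-- Minkowski's determinant inequality, with the square root in place of the `n`-th root.
open scoped MatrixOrder in
theorem PosDef.sqrt_det_add_sqrt_det_le (hn : 1 < Fintype.card n) {A B : Matrix n n ℝ}
    (hA : A.PosDef) (hB : B.PosSemidef) : √(det A) + √(det B) ≤ √(det (A + B)) := by
  obtain ⟨X, rfl⟩ := CStarAlgebra.nonneg_iff_eq_star_mul_self.mp hA.posSemidef.nonneg
  have hdetX : IsUnit (det X) := by
    have h := hA.det_pos
    rw [star_eq_conjTranspose, det_mul, det_conjTranspose, star_trivial] at h
    exact isUnit_iff_ne_zero.mpr fun h0 => by simp [h0] at h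
  have hdet_conj (M : Matrix n n ℝ) : det (Xᴴ * M * X) = det X ^ 2 * det M := by
    rw [det_mul, det_mul, det_conjTranspose, star_trivial]
    ring
  set T := (X⁻¹)ᴴ * B * X⁻¹
  have hT : T.PosSemidef := hB.conjTranspose_mul_mul_same X⁻¹
  have hB_eq : B = Xᴴ * T * X := by
    simp only [T, conjTranspose_nonsing_inv, Matrix.mul_assoc, nonsing_inv_mul _ hdetX,
      mul_one]
    rw [← Matrix.mul_assoc, mul_nonsing_inv _ (by rwa [det_conjTranspose, star_trivial]),
      one_mul]
  have hsum : star X * X + B = Xᴴ * (1 + T) * X := by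
    rw [hB_eq, star_eq_conjTranspose, Matrix.mul_add, Matrix.add_mul, Matrix.mul_one]
  have hA_eq : star X * X = Xᴴ * 1 * X := by rw [Matrix.mul_one, star_eq_conjTranspose]
  rw [hsum, hB_eq, hA_eq, hdet_conj, hdet_conj, hdet_conj, det_one, mul_one,
    Real.sqrt_mul (sq_nonneg _), Real.sqrt_mul (sq_nonneg _), Real.sqrt_sq_eq_abs]
  linarith [mul_le_mul_of_nonneg_left (hT.one_add_sqrt_det_le hn) (abs_nonneg (det X))]

end Matrix

section Gramian

attribute [local instance] Matrix.linftyOpNormedRing Matrix.linftyOpNormedAlgebra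

variable {n : Type*} [Fintype n] [DecidableEq n] (Q B : Matrix n n ℝ)

-- The controllability Gramian; the choice of matrix norm does not affect the Bochner integral.
def ctrlGramian (a b : ℝ) : Matrix n n ℝ :=
  ∫ s in a..b, exp (s • B) * Q * exp (s • Bᵀ)

theorem continuous_exp_smul_mul_mul_exp_smul :
    Continuous fun s : ℝ => exp (s • B) * Q * exp (s • Bᵀ) := by
  fun_prop

theorem ctrlGramian_add_ctrlGramian (a b c : ℝ) :
    ctrlGramian Q B a b + ctrlGramian Q B b c = ctrlGramian Q B a c :=
  intervalIntegral.integral_add_adjacent_intervals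
    ((continuous_exp_smul_mul_mul_exp_smul Q B).intervalIntegrable a b)
    ((continuous_exp_smul_mul_mul_exp_smul Q B).intervalIntegrable b c)

theorem ctrlGramian_add_left (k a b : ℝ) :
    ctrlGramian Q B (k + a) (k + b) =
      exp (k • B) * ctrlGramian Q B a b * (exp (k • B))ᵀ := by
  have hshift (u : ℝ) : exp ((k + u) • B) * Q * exp ((k + u) • Bᵀ) =
      ContinuousLinearMap.mulLeftRight ℝ (Matrix n n ℝ) (exp (k • B)) (exp (k • B))ᵀ
        (exp (u • B) * Q * exp (u • Bᵀ)) := by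
    rw [ContinuousLinearMap.mulLeftRight_apply, add_smul, add_smul,
      Matrix.exp_add_of_commute _ _ ((Commute.refl B).smul_left k |>.smul_right u),
      add_comm (k • Bᵀ),
      Matrix.exp_add_of_commute _ _ ((Commute.refl Bᵀ).smul_left u |>.smul_right k)]
    simp only [← Matrix.transpose_smul, Matrix.exp_transpose, Matrix.mul_assoc]
  rw [ctrlGramian, ← intervalIntegral.integral_comp_add_left, funext hshift,
    ContinuousLinearMap.intervalIntegral_comp_comm _
      ((continuous_exp_smul_mul_mul_exp_smul Q B).intervalIntegrable a b)]
  rfl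

theorem det_ctrlGramian_add_left (k a b : ℝ) :
    det (ctrlGramian Q B (k + a) (k + b)) =
      Real.exp (k * trace B) ^ 2 * det (ctrlGramian Q B a b) := by
  rw [ctrlGramian_add_left, det_mul, det_mul, det_transpose, det_exp, trace_smul, smul_eq_mul]
  ring

theorem smul_hK_eq_ctrlGramian {N : ℕ} (Q B : Matrix (Fin N) (Fin N) ℝ) {t : ℝ}
    (ht : t ≠ 0) :
    t • hK Q B t = ctrlGramian Q B 0 t := by
  ext i j
  have h := ContinuousLinearMap.intervalIntegral_comp_comm
    (LinearMap.toContinuousLinearMap (entryLinearMap ℝ ℝ i j))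
    ((continuous_exp_smul_mul_mul_exp_smul Q B).intervalIntegrable (μ := volume) 0 t)
  rw [Matrix.smul_apply, hK, of_apply, smul_eq_mul, ← mul_assoc, mul_one_div_cancel ht, one_mul]
  exact h

theorem sqrt_det_ctrlGramian_superadditive (hn : 1 < Fintype.card n)
    (hpos : ∀ t > 0, (ctrlGramian Q B 0 t).PosDef) (htr : 0 ≤ trace B) {a b : ℝ}
    (ha : 0 < a) (hb : 0 < b) :
    √(det (ctrlGramian Q B 0 a)) + √(det (ctrlGramian Q B 0 b)) ≤
      √(det (ctrlGramian Q B 0 (a + b))) := by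
  have hshift := ctrlGramian_add_left Q B a 0 b
  have hdet_shift := det_ctrlGramian_add_left Q B a 0 b
  rw [add_zero] at hshift hdet_shift
  have hpsd : (ctrlGramian Q B a (a + b)).PosSemidef := by
    rw [hshift]
    simpa using (hpos b hb).posSemidef.mul_mul_conjTranspose_same (exp (a • B))
  have hdet : det (ctrlGramian Q B 0 b) ≤ det (ctrlGramian Q B a (a + b)) := by
    have hexp : 1 ≤ Real.exp (a * trace B) ^ 2 := one_le_pow₀ (Real.one_le_exp (by positivity))
    rw [hdet_shift]
    nlinarith [(hpos b hb).det_pos]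
  calc √(det (ctrlGramian Q B 0 a)) + √(det (ctrlGramian Q B 0 b))
      ≤ √(det (ctrlGramian Q B 0 a)) + √(det (ctrlGramian Q B a (a + b))) := by gcongr
    _ ≤ √(det (ctrlGramian Q B 0 (a + b))) := by
      rw [← ctrlGramian_add_ctrlGramian Q B 0 a (a + b)]
      exact (hpos a ha).sqrt_det_add_sqrt_det_le hn hpsd

end Gramian

theorem omegaN_pos (N : ℕ) : 0 < omegaN N :=
  ENNReal.toReal_pos (Metric.measure_ball_pos volume _ one_pos).ne' measure_ball_lt_top.ne

theorem volume_linear_growth_general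
    (N : ℕ) (hN : 2 ≤ N) (Q B : Matrix (Fin N) (Fin N) ℝ)
    (hHor : ∀ t > 0, (hK Q B t).PosDef)
    (htr : 0 ≤ B.trace) :
    ∃ c₁ > (0:ℝ), ∀ t ≥ (1:ℝ), c₁ * t ≤ hV Q B t := by
  have hgram (t : ℝ) (ht : 0 < t) : (ctrlGramian Q B 0 t).PosDef := by
    rw [← smul_hK_eq_ctrlGramian Q B ht.ne']
    exact (hHor t ht).smul ht
  have hcard : 1 < Fintype.card (Fin N) := by rw [Fintype.card_fin]; omega
  set f : ℝ → ℝ := fun t => √(det (ctrlGramian Q B 0 t))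
  have hf1 : 0 < f 1 := Real.sqrt_pos.mpr (hgram 1 one_pos).det_pos
  have hω := omegaN_pos N
  refine ⟨omegaN N * f 1 / 2, by positivity, fun t ht => ?_⟩
  have hgrowth : t / 2 * f 1 ≤ f t := half_mul_le_of_superadditive
    (fun _ _ => Real.sqrt_nonneg _)
    (fun a b ha hb => sqrt_det_ctrlGramian_superadditive Q B hcard hgram htr ha hb) ht
  rw [hV, smul_hK_eq_ctrlGramian Q B (by positivity)]
  calc omegaN N * f 1 / 2 * t = omegaN N * (t / 2 * f 1) := by ring
    _ ≤ omegaN N * f t := by gcongr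

/-- if `tr B ≥ 0` then `V(t)` grows at least linearly at infinity. -/
theorem volume_linear_growth
    (N : ℕ) (hN : 2 ≤ N) (Q B : Matrix (Fin N) (Fin N) ℝ)
    (hQ : Q.PosSemidef)
    (hHor : ∀ t > 0, (hK Q B t).PosDef)
    (htr : 0 ≤ B.trace) :
    ∃ c₁ > (0:ℝ), ∀ t ≥ (1:ℝ), c₁ * t ≤ hV Q B t :=
  volume_linear_growth_general N hN Q B hHor htr
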